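/- arXiv:2401.05364 — 2 statements merged into one kernel-verified Lean document; each statement's English description precedes it below -/
import Mathlib

section
/- Let A : Rel X Y and B : Rel Z W be relations, and let X̄ ⊆ 𝒫(X), Ȳ ⊆ 𝒫(Y), Z̄ ⊆ 𝒫(Z), W̄ ⊆ 𝒫(W) be families of attributes all of whose members are nonempty. Then for all S ∈ X̄, T ∈ Z̄, U ∈ Ȳ, V ∈ W̄: the pair (S × T, U × V) belongs to the coarse-graining of A × B relative to (X̄ ⊠ Z̄, Ȳ ⊠ W̄) (where X̄ ⊠ Z̄ = {S × T | S ∈ X̄, T ∈ Z̄}) if and only if (S, U) belongs to the coarse-graining of A relative to (X̄, Ȳ) and (T, V) belongs to the coarse-graining of B relative to (Z̄, W̄). Equivalently, for nonempty S and T: S × T ⊆ (A × B)† ∘ (U × V) iff S ⊆ A† ∘ U and T ⊆ B† ∘ V. -/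
/-- Preimage of an attribute `T ⊆ Y` under a relation (task) `A ⊆ X × Y`:
`A† ∘ T = {x | ∃ y ∈ T, x ↦_A y}`. -/
def preim {X Y : Type*} (A : Set (X × Y)) (T : Set Y) : Set X :=
  {x | ∃ y ∈ T, (x, y) ∈ A}

/-- Parallel composition `A × B ⊆ (X × Z) × (Y × W)` of relations
`A ⊆ X × Y` and `B ⊆ Z × W`. -/
def rpar {X Y Z W : Type*} (A : Set (X × Y)) (B : Set (Z × W)) :
    Set ((X × Z) × (Y × W)) :=
  {p | (p.1.1, p.2.1) ∈ A ∧ (p.1.2, p.2.2) ∈ B}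

/-- Coarse-graining `A|_{X̄}^{Ȳ}` of a relation `A ⊆ X × Y` relative to
families of attributes `X̄ ⊆ 𝒫(X)` and `Ȳ ⊆ 𝒫(Y)`. -/
def coarse {X Y : Type*} (A : Set (X × Y)) (Xb : Set (Set X)) (Yb : Set (Set Y)) :
    Set (Set X × Set Y) :=
  {p | p.1 ∈ Xb ∧ p.2 ∈ Yb ∧ p.1 ⊆ preim A p.2}

lemma key {X Y Z W : Type*} (A : Set (X × Y)) (B : Set (Z × W))
    {S : Set X} {T : Set Z} (U : Set Y) (V : Set W)
    (hS : S.Nonempty) (hT : T.Nonempty) :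
    S ×ˢ T ⊆ preim (rpar A B) (U ×ˢ V) ↔ S ⊆ preim A U ∧ T ⊆ preim B V := by
  constructor
  · intro h
    constructor
    · intro x hx
      obtain ⟨t, ht⟩ := hT
      obtain ⟨⟨y, w⟩, ⟨hy, hw⟩, hA, hB⟩ := h (Set.mk_mem_prod hx ht)
      exact ⟨y, hy, hA⟩
    · intro z hz
      obtain ⟨s, hs⟩ := hS
      obtain ⟨⟨y, w⟩, ⟨hy, hw⟩, hA, hB⟩ := h (Set.mk_mem_prod hs hz)
      exact ⟨w, hw, hB⟩
  · rintro ⟨h1, h2⟩ ⟨x, z⟩ ⟨hx, hz⟩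
    obtain ⟨y, hy, hA⟩ := h1 hx
    obtain ⟨w, hw, hB⟩ := h2 hz
    exact ⟨(y, w), ⟨hy, hw⟩, hA, hB⟩

/-- For families of nonempty attributes, membership of `(S × T, U × V)` in the
coarse-graining of `A × B` relative to the product families is equivalent to the
conjunction of the memberships of `(S, U)` and `(T, V)` in the respective
coarse-grainings; equivalently, for nonempty `S` and `T`,
`S × T ⊆ (A × B)† ∘ (U × V)` iff `S ⊆ A† ∘ U` and `T ⊆ B† ∘ V`. -/
theorem stmt8 {X Y Z W : Type*} (A : Set (X × Y)) (B : Set (Z × W))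
    (Xb : Set (Set X)) (Yb : Set (Set Y)) (Zb : Set (Set Z)) (Wb : Set (Set W))
    (hX : ∀ S ∈ Xb, S.Nonempty) (hY : ∀ U ∈ Yb, U.Nonempty)
    (hZ : ∀ T ∈ Zb, T.Nonempty) (hW : ∀ V ∈ Wb, V.Nonempty) :
    ∀ S ∈ Xb, ∀ T ∈ Zb, ∀ U ∈ Yb, ∀ V ∈ Wb,
      ((S ×ˢ T, U ×ˢ V) ∈ coarse (rpar A B)
            (Set.image2 (· ×ˢ ·) Xb Zb) (Set.image2 (· ×ˢ ·) Yb Wb)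
        ↔ (S, U) ∈ coarse A Xb Yb ∧ (T, V) ∈ coarse B Zb Wb) ∧
      (S ×ˢ T ⊆ preim (rpar A B) (U ×ˢ V) ↔ S ⊆ preim A U ∧ T ⊆ preim B V) := by
  intro S hS T hT U hU V hV
  have hk := key A B U V (hX S hS) (hZ T hT)
  refine ⟨?_, hk⟩
  constructor
  · rintro ⟨-, -, hsub⟩
    obtain ⟨h1, h2⟩ := hk.mp hsub
    exact ⟨⟨hS, hU, h1⟩, ⟨hT, hV, h2⟩⟩
  · rintro ⟨⟨_, _, h1⟩, ⟨_, _, h2⟩⟩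
    exact ⟨Set.mem_image2_of_mem hS hT, Set.mem_image2_of_mem hU hV, hk.mpr ⟨h1, h2⟩⟩
end

section
/- Let 𝒞 be a symmetric monoidal category with a choice of substrate states Γ. For all objects H, K of 𝒞, the swap task σ : Rel (Γ(H ⊗ K)) (Γ(K ⊗ H)), defined by relating ρ ⋆ γ to γ ⋆ ρ for every ρ ∈ Γ(H) and γ ∈ Γ(K) (this is well defined since (ρ, γ) ↦ ρ ⋆ γ is a bijection Γ(H) × Γ(K) → Γ(H ⊗ K)), is possible; it is witnessed by the trivial constructor 𝟙, the attribute P = Γ(𝟙), and a task-inducing morphism built from the braiding β_{H,K} and unitors. -/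
open CategoryTheory MonoidalCategory

/-- The joint state `ρ ⋆ γ := (λ_𝟙)⁻¹ ≫ (ρ ⊗ γ) : 𝟙 ⟶ H ⊗ K` of two states. -/
def pstate {C : Type*} [Category C] [MonoidalCategory C] {H K : C}
    (ρ : 𝟙_ C ⟶ H) (γ : 𝟙_ C ⟶ K) : 𝟙_ C ⟶ H ⊗ K :=
  (λ_ (𝟙_ C)).inv ≫ (ρ ⊗ₘ γ)

/-- A choice of substrate states: a family `Γ` of sets of states, containing exactly
the identity on the unit object, and such that `(ρ, γ) ↦ ρ ⋆ γ` restricts to a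
bijection from `Γ H × Γ K` onto `Γ (H ⊗ K)`. -/
structure SubstrateStates (C : Type*) [Category C] [MonoidalCategory C] where
  Γ : ∀ H : C, Set (𝟙_ C ⟶ H)
  unit_eq : Γ (𝟙_ C) = {𝟙 (𝟙_ C)}
  star_bijOn : ∀ H K : C,
    Set.BijOn (fun p : (𝟙_ C ⟶ H) × (𝟙_ C ⟶ K) => pstate p.1 p.2)
      (Γ H ×ˢ Γ K) (Γ (H ⊗ K))

/-- A morphism `f : H ⟶ K` is task-inducing if it maps states in `Γ H` to states
in `Γ K`. -/
def TaskInducing {C : Type*} [Category C] [MonoidalCategory C]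
    (G : SubstrateStates C) {H K : C} (f : H ⟶ K) : Prop :=
  ∀ ρ ∈ G.Γ H, ρ ≫ f ∈ G.Γ K

/-- The task `A : Rel (Γ H) (Γ K)` is possible, witnessed by the constructor `Con`:
there are an attribute `P ⊆ Γ Con` and a task-inducing process
`f : H ⊗ Con ⟶ K ⊗ Con` such that (1) `A` is obtained from the induced task by
pre-conditioning on `P` and discarding the constructor output, and (2) the attribute
`P` is preserved by the induced task. -/
def PossibleWith {C : Type*} [Category C] [MonoidalCategory C]
    (G : SubstrateStates C) {H K : C} (Con : C)
    (A : Set ((𝟙_ C ⟶ H) × (𝟙_ C ⟶ K))) : Prop :=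
  ∃ P ⊆ G.Γ Con, ∃ f : H ⊗ Con ⟶ K ⊗ Con, TaskInducing G f ∧
    (∀ ρ ∈ G.Γ H, ∀ ρ' ∈ G.Γ K,
      ((ρ, ρ') ∈ A ↔ ∃ γ ∈ P, ∃ γ' ∈ G.Γ Con, pstate ρ γ ≫ f = pstate ρ' γ')) ∧
    (∀ ρ ∈ G.Γ H, ∀ γ ∈ P, ∀ ρ' ∈ G.Γ K, ∀ γ' ∈ G.Γ Con,
      pstate ρ γ ≫ f = pstate ρ' γ' → γ' ∈ P)

section

variable {C : Type*} [Category C] [MonoidalCategory C]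

lemma pstate_id_right {H : C} (ρ : 𝟙_ C ⟶ H) : pstate ρ (𝟙 (𝟙_ C)) = ρ ≫ (ρ_ H).inv := by
  simp [pstate, MonoidalCategory.tensorHom_def, ← unitors_equal]

lemma pstate_comp_braiding [BraidedCategory C] {H K : C} (ρ : 𝟙_ C ⟶ H) (γ : 𝟙_ C ⟶ K) :
    pstate ρ γ ≫ (β_ H K).hom = pstate γ ρ := by
  rw [pstate, Category.assoc, BraidedCategory.braiding_naturality]
  simp [pstate, ← unitors_equal]

namespace SubstrateStates

variable (G : SubstrateStates C)

lemma mem_Γ_unit_iff {γ : 𝟙_ C ⟶ 𝟙_ C} : γ ∈ G.Γ (𝟙_ C) ↔ γ = 𝟙 (𝟙_ C) := by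
  rw [G.unit_eq, Set.mem_singleton_iff]

lemma exists_eq_pstate {H K : C} {τ : 𝟙_ C ⟶ H ⊗ K} (hτ : τ ∈ G.Γ (H ⊗ K)) :
    ∃ ρ ∈ G.Γ H, ∃ γ ∈ G.Γ K, pstate ρ γ = τ := by
  obtain ⟨⟨ρ, γ⟩, ⟨hρ, hγ⟩, rfl⟩ := (G.star_bijOn H K).surjOn hτ
  exact ⟨ρ, hρ, γ, hγ, rfl⟩

lemma pstate_mem {H K : C} {ρ : 𝟙_ C ⟶ H} {γ : 𝟙_ C ⟶ K} (hρ : ρ ∈ G.Γ H)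
    (hγ : γ ∈ G.Γ K) : pstate ρ γ ∈ G.Γ (H ⊗ K) :=
  (G.star_bijOn H K).mapsTo (Set.mk_mem_prod hρ hγ)

lemma mem_Γ_tensorUnit_iff {H : C} {τ : 𝟙_ C ⟶ H ⊗ 𝟙_ C} :
    τ ∈ G.Γ (H ⊗ 𝟙_ C) ↔ τ ≫ (ρ_ H).hom ∈ G.Γ H := by
  constructor
  · intro hτ
    obtain ⟨ρ, hρ, γ, hγ, rfl⟩ := G.exists_eq_pstate hτ
    rw [G.mem_Γ_unit_iff] at hγ
    subst hγ
    simpa [pstate_id_right] using hρ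
  · intro hτ
    simpa [pstate_id_right] using G.pstate_mem hτ ((G.mem_Γ_unit_iff).2 rfl)

lemma taskInducing_braiding [BraidedCategory C] (H K : C) : TaskInducing G (β_ H K).hom := by
  intro τ hτ
  obtain ⟨ρ, hρ, γ, hγ, rfl⟩ := G.exists_eq_pstate hτ
  rw [pstate_comp_braiding]
  exact G.pstate_mem hγ hρ

/-- The witness is `P = Γ 𝟙` together with `g` conjugated by right unitors. -/
theorem possibleWith_unit_of_taskInducing {H K : C} {g : H ⟶ K} (hg : TaskInducing G g)
    {A : Set ((𝟙_ C ⟶ H) × (𝟙_ C ⟶ K))}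
    (hA : ∀ ρ ∈ G.Γ H, ∀ ρ' ∈ G.Γ K, (ρ, ρ') ∈ A ↔ ρ ≫ g = ρ') :
    PossibleWith G (𝟙_ C) A := by
  refine ⟨G.Γ (𝟙_ C), subset_rfl, (ρ_ H).hom ≫ g ≫ (ρ_ K).inv, ?_, ?_, fun _ _ _ _ _ _ _ h _ => h⟩
  · intro τ hτ
    rw [G.mem_Γ_tensorUnit_iff] at hτ ⊢
    simpa using hg _ hτ
  · intro ρ hρ ρ' hρ'
    simp only [G.mem_Γ_unit_iff, exists_eq_left, pstate_id_right, hA ρ hρ ρ' hρ']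
    rw [Category.assoc, Iso.inv_hom_id_assoc, ← Category.assoc, cancel_mono]

end SubstrateStates

end

/-- The swap task, relating `ρ ⋆ γ` to `γ ⋆ ρ` for all `ρ ∈ Γ H`, `γ ∈ Γ K`, is
possible, witnessed by the unit object `𝟙` as trivial constructor. -/
theorem stmt10 {C : Type*} [Category C] [MonoidalCategory C] [SymmetricCategory C]
    (G : SubstrateStates C) (H K : C) :
    PossibleWith G (𝟙_ C)
      {p : (𝟙_ C ⟶ H ⊗ K) × (𝟙_ C ⟶ K ⊗ H) |
        ∃ ρ ∈ G.Γ H, ∃ γ ∈ G.Γ K, p.1 = pstate ρ γ ∧ p.2 = pstate γ ρ} := by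
  refine G.possibleWith_unit_of_taskInducing (G.taskInducing_braiding H K) ?_
  intro τ hτ τ' _
  constructor
  · rintro ⟨ρ, -, γ, -, rfl, rfl⟩
    exact pstate_comp_braiding ρ γ
  · rintro rfl
    obtain ⟨ρ, hρ, γ, hγ, rfl⟩ := G.exists_eq_pstate hτ
    exact ⟨ρ, hρ, γ, hγ, rfl, pstate_comp_braiding ρ γ⟩
end
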